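/- Let n ≥ 2 be an integer, t ∈ [0, π/2), s = sin t, and let E₁,…,E_{n+1} ∈ ℝⁿ be unit vectors with ⟨E_i, E_j⟩ = -1/n for i ≠ j. For 0 ≤ k ≤ n-1 let c = (1/(n-k+1))·(E₁ + ⋯ + E_{n-k+1}). Then d_K(s·c, s·E₁) = artanh( s·√(1 - k/(n(n-k+1))) / √(1 - s²·k/(n(n-k+1))) ). (This is the hyperbolic circumradius r_{n-k} of the (n-k)-dimensional face of the regular simplex τ[n,t].) -/

import Mathlib

open scoped RealInnerProductSpace
open Real

noncomputable def arcosh (x : ℝ) : ℝ := Real.log (x + Real.sqrt (x ^ 2 - 1))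

noncomputable def artanh (x : ℝ) : ℝ := (1 / 2) * Real.log ((1 + x) / (1 - x))

/-- Hyperbolic distance in the Cayley–Klein projective model. -/
noncomputable def dK {n : ℕ} (u w : EuclideanSpace ℝ (Fin n)) : ℝ :=
  _root_.arcosh ((1 - ⟪u, w⟫) / Real.sqrt ((1 - ‖u‖ ^ 2) * (1 - ‖w‖ ^ 2)))

/-!
The barycenter `c` of a face spanned by `m` vertices of the regular simplex satisfies
`⟪c, E i⟫ = ‖c‖² = (1 - (m - 1) / n) / m` for every vertex `E i` of that face, which for
`m = n - k + 1` is `a = k / (n (n - k + 1))`. Hence `E i - c ⊥ c`, and for such a pair the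
Cayley–Klein formula gives `cosh d_K(s c, s E i) = √(1 - s² a) / √(1 - s²) = (1 - y²)^(-1/2)`
with `y = s √(1 - a) / √(1 - s² a)`, i.e. `d_K = artanh y`.
-/

theorem arcosh_inv_sqrt_one_sub_sq {y : ℝ} (hy0 : 0 ≤ y) (hy1 : y < 1) :
    _root_.arcosh (√(1 - y ^ 2))⁻¹ = _root_.artanh y := by
  have hpos : 0 < 1 - y ^ 2 := by nlinarith
  set r := √(1 - y ^ 2)
  have hr0 : 0 < r := Real.sqrt_pos.mpr hpos
  have hr2 : r ^ 2 = 1 - y ^ 2 := Real.sq_sqrt hpos.le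
  have hroot : √(r⁻¹ ^ 2 - 1) = y / r := by
    rw [show r⁻¹ ^ 2 - 1 = (y / r) ^ 2 by field_simp; linarith, Real.sqrt_sq (by positivity)]
  have hsq : ((1 + y) / r) ^ 2 = (1 + y) / (1 - y) := by
    rw [div_pow, hr2, div_eq_div_iff (by nlinarith) (by linarith)]
    ring
  rw [_root_.arcosh, _root_.artanh, hroot, ← hsq, Real.log_pow]
  field_simp
  ring_nf

section RegularSimplex

variable {V ι : Type*} [NormedAddCommGroup V] [InnerProductSpace ℝ V] [Fintype ι] [DecidableEq ι]
  {F : ι → V} {b : ℝ}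

theorem inner_sum_of_inner_eq (hnorm : ∀ i, ‖F i‖ = 1) (hinner : ∀ i j, i ≠ j → ⟪F i, F j⟫ = b)
    (i : ι) : ⟪∑ j, F j, F i⟫ = 1 + (Fintype.card ι - 1) * b := by
  have hcard : ((Finset.univ.erase i).card : ℝ) = Fintype.card ι - 1 := by
    rw [Finset.card_erase_of_mem (Finset.mem_univ i), Finset.card_univ,
      Nat.cast_sub (Fintype.card_pos_iff.mpr ⟨i⟩), Nat.cast_one]
  rw [sum_inner, ← Finset.add_sum_erase _ _ (Finset.mem_univ i), real_inner_self_eq_norm_sq,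
    hnorm, Finset.sum_congr rfl fun j hj => hinner j i (Finset.ne_of_mem_erase hj),
    Finset.sum_const, nsmul_eq_mul, hcard, one_pow]

theorem inner_centroid_of_inner_eq (hnorm : ∀ i, ‖F i‖ = 1)
    (hinner : ∀ i j, i ≠ j → ⟪F i, F j⟫ = b) (i : ι) :
    ⟪(Fintype.card ι : ℝ)⁻¹ • ∑ j, F j, F i⟫ =
      (1 + (Fintype.card ι - 1) * b) / Fintype.card ι := by
  rw [real_inner_smul_left, inner_sum_of_inner_eq hnorm hinner, inv_mul_eq_div]

theorem norm_sq_centroid_of_inner_eq [Nonempty ι] (hnorm : ∀ i, ‖F i‖ = 1)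
    (hinner : ∀ i j, i ≠ j → ⟪F i, F j⟫ = b) :
    ‖(Fintype.card ι : ℝ)⁻¹ • ∑ j, F j‖ ^ 2 =
      (1 + (Fintype.card ι - 1) * b) / Fintype.card ι := by
  have hcard : (Fintype.card ι : ℝ) ≠ 0 := Nat.cast_ne_zero.mpr Fintype.card_ne_zero
  rw [← real_inner_self_eq_norm_sq, inner_smul_right, inner_sum]
  simp_rw [inner_centroid_of_inner_eq hnorm hinner]
  rw [Finset.sum_const, Finset.card_univ, nsmul_eq_mul, inv_mul_cancel_left₀ hcard]

end RegularSimplex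

theorem dK_smul_of_inner_eq_norm_sq {n : ℕ} {u w : EuclideanSpace ℝ (Fin n)} {s : ℝ}
    (hs0 : 0 ≤ s) (hs1 : s < 1) (hw : ‖w‖ = 1) (huw : ⟪u, w⟫ = ‖u‖ ^ 2) :
    dK (s • u) (s • w) =
      _root_.artanh (s * √(1 - ‖u‖ ^ 2) / √(1 - s ^ 2 * ‖u‖ ^ 2)) := by
  have hu1 : ‖u‖ ≤ 1 := by
    have := real_inner_le_norm u w
    rw [huw, hw] at this
    nlinarith [norm_nonneg u]
  set a := ‖u‖ ^ 2
  have ha1 : a ≤ 1 := by nlinarith [norm_nonneg u]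
  have hA : 0 < 1 - s ^ 2 * a := by nlinarith
  have hB : 0 < 1 - s ^ 2 := by nlinarith
  set y := s * √(1 - a) / √(1 - s ^ 2 * a)
  have hy2 : y ^ 2 = s ^ 2 * (1 - a) / (1 - s ^ 2 * a) := by
    rw [div_pow, mul_pow, Real.sq_sqrt (by linarith), Real.sq_sqrt hA.le]
  have hy0 : 0 ≤ y := by positivity
  have hy1 : y < 1 := by
    rw [← abs_of_nonneg hy0, ← sq_lt_one_iff_abs_lt_one, hy2, div_lt_one hA]
    linarith
  have harg : (1 - s ^ 2 * a) / √((1 - s ^ 2 * a) * (1 - s ^ 2)) = (√(1 - y ^ 2))⁻¹ := by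
    rw [hy2, show 1 - s ^ 2 * (1 - a) / (1 - s ^ 2 * a) = (1 - s ^ 2) / (1 - s ^ 2 * a) by
      field_simp; ring, Real.sqrt_div hB.le, Real.sqrt_mul hA.le, inv_div,
      div_mul_eq_div_div, Real.div_sqrt]
  rw [dK, real_inner_smul_left, real_inner_smul_right, huw, norm_smul, norm_smul, hw,
    Real.norm_of_nonneg hs0]
  rw [show 1 - s * (s * a) = 1 - s ^ 2 * a by ring, show (s * ‖u‖) ^ 2 = s ^ 2 * a by ring,
    mul_one, harg, arcosh_inv_sqrt_one_sub_sq hy0 hy1]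

theorem face_circumradius (n : ℕ) (hn : 2 ≤ n) (t : ℝ) (ht : t ∈ Set.Ico 0 (π / 2))
    (s : ℝ) (hs : s = Real.sin t)
    (E : Fin (n + 1) → EuclideanSpace ℝ (Fin n))
    (hnorm : ∀ i, ‖E i‖ = 1)
    (hinner : ∀ i j, i ≠ j → ⟪E i, E j⟫ = -1 / (n : ℝ))
    (k : ℕ) (hk : k ≤ n - 1)
    (c : EuclideanSpace ℝ (Fin n))
    (hc : c = ((n : ℝ) - k + 1)⁻¹ • ∑ i : Fin (n - k + 1), E (Fin.castLE (by omega) i)) :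
    dK (s • c) (s • E 0) =
      _root_.artanh (s * Real.sqrt (1 - (k : ℝ) / (n * ((n : ℝ) - k + 1))) /
        Real.sqrt (1 - s ^ 2 * ((k : ℝ) / (n * ((n : ℝ) - k + 1))))) := by
  have hle : n - k + 1 ≤ n + 1 := by omega
  set F : Fin (n - k + 1) → EuclideanSpace ℝ (Fin n) := fun i => E (Fin.castLE hle i)
  have hFnorm : ∀ i, ‖F i‖ = 1 := fun i => hnorm _
  have hFinner : ∀ i j, i ≠ j → ⟪F i, F j⟫ = -1 / (n : ℝ) :=
    fun i j hij => hinner _ _ ((Fin.castLE_injective hle).ne hij)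
  have hcard : (Fintype.card (Fin (n - k + 1)) : ℝ) = n - k + 1 := by
    rw [Fintype.card_fin, Nat.cast_add_one, Nat.cast_sub (by omega)]
  have hface : (1 + (Fintype.card (Fin (n - k + 1)) - 1) * (-1 / n : ℝ)) /
      Fintype.card (Fin (n - k + 1)) = k / (n * ((n : ℝ) - k + 1)) := by
    have hn0 : (n : ℝ) ≠ 0 := Nat.cast_ne_zero.mpr (by omega)
    have hm0 : (n : ℝ) - k + 1 ≠ 0 := by rw [← hcard]; positivity
    rw [hcard]
    field_simp
    ring
  have hcF : c = (Fintype.card (Fin (n - k + 1)) : ℝ)⁻¹ • ∑ j, F j := by rw [hc, hcard]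
  have hcc : ‖c‖ ^ 2 = k / (n * ((n : ℝ) - k + 1)) := by
    rw [hcF, norm_sq_centroid_of_inner_eq hFnorm hFinner, hface]
  have hcE : ⟪c, E 0⟫ = ‖c‖ ^ 2 := by
    rw [hcc, ← hface, hcF, show E 0 = F 0 from rfl, inner_centroid_of_inner_eq hFnorm hFinner]
  have hs0 : 0 ≤ s := hs ▸ Real.sin_nonneg_of_nonneg_of_le_pi ht.1 (by linarith [ht.2, pi_pos])
  have hs1 : s < 1 := by
    rw [hs, ← Real.sin_pi_div_two]
    exact Real.sin_lt_sin_of_lt_of_le_pi_div_two (by linarith [ht.1, pi_pos]) le_rfl ht.2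
  rw [dK_smul_of_inner_eq_norm_sq hs0 hs1 (hnorm 0) hcE, hcc]
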